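/- arXiv:2603.08322 — 2 statements merged into one kernel-verified Lean document; each statement's English description precedes it below -/
import Mathlib

section
/- For n ≡ 1 (mod 3), every n × n Latin square L satisfies 3·I(L) ≥ 4n(n−1)/3, equivalently 9·I(L) ≥ 4n(n−1), where I(L) = (1/3)·Σ_{r₁<r₂} |3·d(r₁,r₂) − n(n+1)|. -/
open Finset

structure LatinSquare (n : ℕ) where
  toFun : Fin n → Fin n → Fin n
  row_bij : ∀ r, Function.Bijective (toFun r)
  col_bij : ∀ c, Function.Bijective (fun r => toFun r c)

namespace LatinSquare

variable {n : ℕ}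

/-- The column containing symbol `s` in row `r`. -/
noncomputable def pos (L : LatinSquare n) (r s : Fin n) : Fin n :=
  (Equiv.ofBijective _ (L.row_bij r)).symm s

/-- The distance between two rows. -/
noncomputable def dist (L : LatinSquare n) (r₁ r₂ : Fin n) : ℤ :=
  ∑ s : Fin n, |((L.pos r₁ s : ℕ) : ℤ) - ((L.pos r₂ s : ℕ) : ℤ)|

/-- Three times the imbalance, `3·I(L)`. -/
noncomputable def imbalance3 (L : LatinSquare n) : ℤ :=
  ∑ p ∈ Finset.univ.filter (fun p : Fin n × Fin n => p.1 < p.2),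
    |3 * L.dist p.1 p.2 - (n : ℤ) * ((n : ℤ) + 1)|

end LatinSquare

/-! ### Auxiliary lemmas -/

lemma auxIB_gauss (n : ℕ) : 2 * ∑ i ∈ Finset.range n, (i : ℤ) = n * (n - 1) := by
  induction n with
  | zero => simp
  | succ m ih =>
    rw [Finset.sum_range_succ]
    push_cast
    push_cast at ih
    ring_nf
    ring_nf at ih
    linarith

lemma auxIB_T (n : ℕ) :
    3 * (∑ i ∈ Finset.range n, ∑ j ∈ Finset.range n, |(i : ℤ) - j|) =
      (n : ℤ) ^ 3 - n := by
  induction n with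
  | zero => simp
  | succ m ih =>
    have hg := auxIB_gauss m
    rw [Finset.sum_range_succ]
    have h1 : ∀ i ∈ Finset.range m, (∑ j ∈ Finset.range (m+1), |(i:ℤ) - j|)
        = (∑ j ∈ Finset.range m, |(i:ℤ) - j|) + ((m : ℤ) - i) := by
      intro i hi
      rw [Finset.sum_range_succ]
      have : |(i:ℤ) - m| = (m : ℤ) - i := by
        have : (i : ℤ) < m := by exact_mod_cast Finset.mem_range.mp hi
        rw [abs_sub_comm, abs_of_nonneg] <;> linarith
      rw [this]
    rw [Finset.sum_congr rfl h1, Finset.sum_add_distrib]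
    have h2 : (∑ j ∈ Finset.range (m+1), |(m:ℤ) - j|)
        = ∑ j ∈ Finset.range (m+1), ((m:ℤ) - j) := by
      apply Finset.sum_congr rfl
      intro j hj
      have : (j : ℤ) ≤ m := by
        have := Finset.mem_range.mp hj; omega
      rw [abs_of_nonneg]; linarith
    rw [h2]
    simp only [Finset.sum_sub_distrib, Finset.sum_const, Finset.card_range,
      Finset.sum_range_succ]
    simp only [nsmul_eq_mul]
    push_cast
    push_cast at ih hg
    ring_nf
    ring_nf at ih hg
    nlinarith [sq_nonneg ((m:ℤ))]

lemma auxIB_T_fin (n : ℕ) :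
    3 * (∑ i : Fin n, ∑ j : Fin n, |((i : ℕ) : ℤ) - ((j : ℕ) : ℤ)|) =
      (n : ℤ) ^ 3 - n := by
  rw [← auxIB_T n]
  congr 1
  rw [Fin.sum_univ_eq_sum_range (fun i => ∑ j : Fin n, |((i : ℕ) : ℤ) - ((j : ℕ) : ℤ)|)]
  refine Finset.sum_congr rfl fun i _ => ?_
  rw [Fin.sum_univ_eq_sum_range (fun j => |((i : ℕ) : ℤ) - ((j : ℕ) : ℤ)|)]

lemma auxIB_bij (n : ℕ) (σ : Fin n → Fin n) (hσ : Function.Bijective σ) :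
    (∑ i : Fin n, ∑ j : Fin n, |((σ i : ℕ) : ℤ) - ((σ j : ℕ) : ℤ)|)
      = ∑ i : Fin n, ∑ j : Fin n, |((i : ℕ) : ℤ) - ((j : ℕ) : ℤ)| := by
  set e := Equiv.ofBijective σ hσ
  calc (∑ i : Fin n, ∑ j : Fin n, |((σ i : ℕ) : ℤ) - ((σ j : ℕ) : ℤ)|)
      = ∑ i : Fin n, ∑ j : Fin n, |((σ i : ℕ) : ℤ) - ((j : ℕ) : ℤ)| := by
        refine Finset.sum_congr rfl fun i _ => ?_
        exact Equiv.sum_comp e (fun j => |((σ i : ℕ) : ℤ) - ((j : ℕ) : ℤ)|)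
    _ = ∑ i : Fin n, ∑ j : Fin n, |((i : ℕ) : ℤ) - ((j : ℕ) : ℤ)| :=
        Equiv.sum_comp e (fun i => ∑ j : Fin n, |((i : ℕ) : ℤ) - ((j : ℕ) : ℤ)|)

lemma auxIB_double (n : ℕ) (g : Fin n → Fin n → ℤ)
    (hsymm : ∀ a b, g a b = g b a) (hdiag : ∀ a, g a a = 0) :
    2 * ∑ p ∈ Finset.univ.filter (fun p : Fin n × Fin n => p.1 < p.2), g p.1 p.2
      = ∑ i : Fin n, ∑ j : Fin n, g i j := by
  have hswap : ∑ p ∈ Finset.univ.filter (fun p : Fin n × Fin n => p.2 < p.1), g p.1 p.2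
      = ∑ p ∈ Finset.univ.filter (fun p : Fin n × Fin n => p.1 < p.2), g p.1 p.2 := by
    apply Finset.sum_nbij' (fun p => p.swap) (fun p => p.swap) <;>
      simp [hsymm]
  have htot : ∑ i : Fin n, ∑ j : Fin n, g i j = ∑ p : Fin n × Fin n, g p.1 p.2 := by
    rw [Fintype.sum_prod_type]
  rw [htot, ← Finset.sum_filter_add_sum_filter_not Finset.univ
    (fun p : Fin n × Fin n => p.1 < p.2) (fun p => g p.1 p.2)]
  have hsplit : ∑ p ∈ Finset.univ.filter (fun p : Fin n × Fin n => ¬ p.1 < p.2), g p.1 p.2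
      = ∑ p ∈ Finset.univ.filter (fun p : Fin n × Fin n => p.2 < p.1), g p.1 p.2 := by
    rw [← Finset.sum_filter_add_sum_filter_not
      (Finset.univ.filter (fun p : Fin n × Fin n => ¬ p.1 < p.2))
      (fun p : Fin n × Fin n => p.2 < p.1) (fun p => g p.1 p.2)]
    have h1 : (Finset.univ.filter (fun p : Fin n × Fin n => ¬ p.1 < p.2)).filter
        (fun p : Fin n × Fin n => p.2 < p.1)
        = Finset.univ.filter (fun p : Fin n × Fin n => p.2 < p.1) := by
      rw [Finset.filter_filter]
      apply Finset.filter_congr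
      intro p _
      constructor
      · rintro ⟨_, h⟩; exact h
      · intro h; exact ⟨not_lt_of_gt h, h⟩
    have h2 : ∑ p ∈ (Finset.univ.filter (fun p : Fin n × Fin n => ¬ p.1 < p.2)).filter
        (fun p : Fin n × Fin n => ¬ p.2 < p.1), g p.1 p.2 = 0 := by
      apply Finset.sum_eq_zero
      intro p hp
      simp only [Finset.mem_filter, Finset.mem_univ, true_and, not_lt] at hp
      have : p.1 = p.2 := le_antisymm hp.2 hp.1
      rw [this, hdiag]
    rw [h1, h2, add_zero]
  rw [hsplit, hswap]
  ring

lemma auxIB_card (n : ℕ) :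
    2 * ((Finset.univ.filter (fun p : Fin n × Fin n => p.1 < p.2)).card : ℤ)
      = n * n - n := by
  have hd := auxIB_double n (fun a b => if a = b then (0:ℤ) else 1)
    (fun a b => by by_cases h : a = b <;> simp [h, eq_comm]) (fun a => by simp)
  have h1 : ∑ p ∈ Finset.univ.filter (fun p : Fin n × Fin n => p.1 < p.2),
      (if p.1 = p.2 then (0:ℤ) else 1)
      = ((Finset.univ.filter (fun p : Fin n × Fin n => p.1 < p.2)).card : ℤ) := by
    rw [Finset.sum_congr rfl
      (fun p hp => if_neg (ne_of_lt (Finset.mem_filter.mp hp).2))]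
    simp
  have h2 : ∀ i : Fin n, ∑ j : Fin n, (if i = j then (0:ℤ) else 1) = n - 1 := by
    intro i
    have he : (fun j : Fin n => if i = j then (0:ℤ) else 1)
        = fun j => 1 - if i = j then 1 else 0 := by
      funext j; by_cases h : i = j <;> simp [h]
    rw [he, Finset.sum_sub_distrib, Finset.sum_ite_eq]
    simp
  rw [h1] at hd
  rw [hd, Finset.sum_congr rfl (fun i _ => h2 i)]
  simp [Finset.sum_const]

namespace LatinSquare

lemma apply_pos (L : LatinSquare n) (r s : Fin n) : L.toFun r (L.pos r s) = s :=
  (Equiv.ofBijective _ (L.row_bij r)).apply_symm_apply s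

lemma pos_symbol_bijective (L : LatinSquare n) (s : Fin n) :
    Function.Bijective (fun r => L.pos r s) := by
  rw [Fintype.bijective_iff_injective_and_card]
  refine ⟨fun r₁ r₂ h => ?_, rfl⟩
  have h1 : L.toFun r₁ (L.pos r₁ s) = s := L.apply_pos r₁ s
  have h2 : L.toFun r₂ (L.pos r₂ s) = s := L.apply_pos r₂ s
  simp only at h
  rw [h] at h1
  exact (L.col_bij (L.pos r₂ s)).1 (h1.trans h2.symm)

lemma sum_pos (L : LatinSquare n) (r : Fin n) (f : Fin n → ℤ) :
    ∑ s : Fin n, f (L.pos r s) = ∑ s : Fin n, f s :=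
  Equiv.sum_comp (Equiv.ofBijective _ (L.row_bij r)).symm f

lemma dist_even (L : LatinSquare n) (r₁ r₂ : Fin n) : 2 ∣ L.dist r₁ r₂ := by
  have hz : ∑ s : Fin n, (((L.pos r₁ s : ℕ) : ℤ) - ((L.pos r₂ s : ℕ) : ℤ)) = 0 := by
    rw [Finset.sum_sub_distrib]
    rw [L.sum_pos r₁ (fun c => ((c : ℕ) : ℤ)), L.sum_pos r₂ (fun c => ((c : ℕ) : ℤ))]
    ring
  have h1 : L.dist r₁ r₂ =
      (∑ s : Fin n, (|((L.pos r₁ s : ℕ) : ℤ) - ((L.pos r₂ s : ℕ) : ℤ)|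
        - (((L.pos r₁ s : ℕ) : ℤ) - ((L.pos r₂ s : ℕ) : ℤ)))) := by
    rw [Finset.sum_sub_distrib, hz, sub_zero]; rfl
  rw [h1]
  apply Finset.dvd_sum
  intro s _
  rcases abs_cases (((L.pos r₁ s : ℕ) : ℤ) - ((L.pos r₂ s : ℕ) : ℤ)) with ⟨h, _⟩ | ⟨h, _⟩ <;>
    rw [h] <;> [exact ⟨0, by ring⟩;
      exact ⟨-(((L.pos r₁ s : ℕ) : ℤ) - ((L.pos r₂ s : ℕ) : ℤ)), by ring⟩]

lemma dist_symm (L : LatinSquare n) (r₁ r₂ : Fin n) : L.dist r₁ r₂ = L.dist r₂ r₁ := by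
  unfold dist
  exact Finset.sum_congr rfl fun s _ => abs_sub_comm _ _

lemma dist_self (L : LatinSquare n) (r : Fin n) : L.dist r r = 0 := by
  unfold dist; simp

/-- doubled sum of distances over all ordered pairs. -/
lemma sum_dist (L : LatinSquare n) :
    3 * (∑ i : Fin n, ∑ j : Fin n, L.dist i j) = (n : ℤ) * ((n : ℤ) ^ 3 - n) := by
  have h1 : ∑ i : Fin n, ∑ j : Fin n, L.dist i j
      = ∑ s : Fin n, ∑ i : Fin n, ∑ j : Fin n,
          |((L.pos i s : ℕ) : ℤ) - ((L.pos j s : ℕ) : ℤ)| := by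
    unfold dist
    calc ∑ i : Fin n, ∑ j : Fin n, ∑ s : Fin n,
          |((L.pos i s : ℕ) : ℤ) - ((L.pos j s : ℕ) : ℤ)|
        = ∑ i : Fin n, ∑ s : Fin n, ∑ j : Fin n,
          |((L.pos i s : ℕ) : ℤ) - ((L.pos j s : ℕ) : ℤ)| :=
          Finset.sum_congr rfl fun i _ => Finset.sum_comm
      _ = ∑ s : Fin n, ∑ i : Fin n, ∑ j : Fin n,
          |((L.pos i s : ℕ) : ℤ) - ((L.pos j s : ℕ) : ℤ)| := Finset.sum_comm
  rw [h1, Finset.mul_sum]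
  have h2 : ∀ s : Fin n, 3 * (∑ i : Fin n, ∑ j : Fin n,
      |((L.pos i s : ℕ) : ℤ) - ((L.pos j s : ℕ) : ℤ)|) = (n : ℤ) ^ 3 - n := by
    intro s
    rw [auxIB_bij n (fun r => L.pos r s) (L.pos_symbol_bijective s)]
    exact auxIB_T_fin n
  rw [Finset.sum_congr rfl fun s _ => h2 s]
  simp [Finset.sum_const, mul_comm]
  ring

end LatinSquare

theorem LatinSquare.imbalance_lower_bound (n : ℕ) (hn : n % 3 = 1)
    (L : LatinSquare n) :
    3 * L.imbalance3 ≥ 4 * (n : ℤ) * ((n : ℤ) - 1) := by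
  classical
  set P := Finset.univ.filter (fun p : Fin n × Fin n => p.1 < p.2) with hP
  -- sum of (3d - n(n+1)) over P is zero
  have hdd := auxIB_double n (fun a b => L.dist a b) (L.dist_symm) (L.dist_self)
  have hcard := auxIB_card n
  have hsum0 : ∑ p ∈ P, (3 * L.dist p.1 p.2 - (n : ℤ) * ((n : ℤ) + 1)) = 0 := by
    rw [Finset.sum_sub_distrib, Finset.sum_const, ← Finset.mul_sum]
    have hsd := L.sum_dist
    simp only [nsmul_eq_mul]
    nlinarith [hdd, hcard, hsd]
  -- pointwise bound
  have hpt : ∀ p ∈ P, 8 + (3 * L.dist p.1 p.2 - (n : ℤ) * ((n : ℤ) + 1))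
      ≤ 3 * |3 * L.dist p.1 p.2 - (n : ℤ) * ((n : ℤ) + 1)| := by
    intro p _
    obtain ⟨e, he⟩ := L.dist_even p.1 p.2
    obtain ⟨k, hk⟩ : ∃ k : ℕ, n = 3 * k + 1 := ⟨n / 3, by omega⟩
    have hn' : (n : ℤ) = 3 * (k : ℤ) + 1 := by exact_mod_cast congrArg Nat.cast hk
    obtain ⟨j, hj⟩ : ∃ j : ℤ, (k : ℤ) * ((k : ℤ) + 1) = j + j := by
      rcases Int.even_mul_succ_self (k : ℤ) with ⟨j, hj⟩
      exact ⟨j, hj⟩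
    have hx : 3 * L.dist p.1 p.2 - (n : ℤ) * ((n : ℤ) + 1) = 6 * e - 18 * j - 2 := by
      linear_combination 3 * he - 9 * hj - ((n : ℤ) + 3 * (k : ℤ) + 2) * hn'
    rcases abs_cases (3 * L.dist p.1 p.2 - (n : ℤ) * ((n : ℤ) + 1)) with ⟨h, _⟩ | ⟨h, _⟩ <;>
      rw [h] <;> omega
  have hmain : ∑ p ∈ P, (8 + (3 * L.dist p.1 p.2 - (n : ℤ) * ((n : ℤ) + 1)))
      ≤ ∑ p ∈ P, 3 * |3 * L.dist p.1 p.2 - (n : ℤ) * ((n : ℤ) + 1)| :=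
    Finset.sum_le_sum hpt
  rw [Finset.sum_add_distrib, hsum0, add_zero, Finset.sum_const, ← Finset.mul_sum] at hmain
  simp only [nsmul_eq_mul] at hmain
  have himb : L.imbalance3 = ∑ p ∈ P, |3 * L.dist p.1 p.2 - (n : ℤ) * ((n : ℤ) + 1)| := rfl
  rw [ge_iff_le, himb]
  nlinarith [hmain, hcard]
end

section
/- If σ is a near-perfect permutation of order n ≡ 1 (mod 3), i.e., f_σ(δ) ∈ {a, a+2} for all δ ∈ {1,...,n−1} where a = (n(n+1)−2)/3, then the circulant Latin square L[i][j] = (i + σ⁻¹(j)) mod n satisfies imbalance3(L) = 4n(n−1)/3, i.e., I(L) = 4n(n−1)/9 exactly, which attains the lower bound. -/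
open Finset

variable {n : ℕ}

/-- Shift correlation of a permutation of `ZMod n`. -/
def shiftCorr [NeZero n] (σ : Equiv.Perm (ZMod n)) (δ : ZMod n) : ℤ :=
  ∑ j : ZMod n, |((σ (j + δ)).val : ℤ) - ((σ j).val : ℤ)|

/-- Column of symbol `s` in row `r` of the circulant Latin square
`L i j = i + σ⁻¹ j`: the inverse of the row bijection `j ↦ r + σ.symm j`. -/
def circPos (σ : Equiv.Perm (ZMod n)) (r s : ZMod n) : ZMod n :=
  (σ.symm.trans (Equiv.addLeft r)).symm s

/-- Row-pair distance of the circulant Latin square `L i j = i + σ⁻¹ j`. -/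
def circDist [NeZero n] (σ : Equiv.Perm (ZMod n)) (r₁ r₂ : ZMod n) : ℤ :=
  ∑ s : ZMod n, |((circPos σ r₁ s).val : ℤ) - ((circPos σ r₂ s).val : ℤ)|

/-- `3·I(L)` for the circulant Latin square built from `σ`. -/
def circImbalance3 [NeZero n] (σ : Equiv.Perm (ZMod n)) : ℤ :=
  ∑ p ∈ Finset.univ.filter (fun p : ZMod n × ZMod n => p.1.val < p.2.val),
    |3 * circDist σ p.1 p.2 - (n : ℤ) * ((n : ℤ) + 1)|

/-!
For rows `r₁ ≠ r₂` the distance `d(r₁, r₂)` equals `f_σ(r₁ - r₂)`, so near-perfectness forces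
`x = 3 d - n (n + 1) ∈ {-2, 4}`, and on these two values `3 |x| = x + 8` is linear. Hence
`3 · imbalance3` is a linear combination of `∑_{r₁ < r₂} d(r₁, r₂)` and the number of pairs. The
former is fixed for every Latin square, since each symbol's column positions run over all of `ZMod n`
(the Fixed Sum Lemma), and its contribution cancels against `n (n + 1) · (n choose 2)`, leaving
`8 · (n choose 2)`.
-/

theorem sum_range_sum_range_abs_sub (m : ℕ) :
    3 * ∑ i ∈ range m, ∑ j ∈ range m, |(i : ℤ) - j| = (m : ℤ) ^ 3 - m := by
  induction m with
  | zero => simp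
  | succ m ih =>
    have hgauss : (∑ i ∈ range (m + 1), (i : ℤ)) * 2 = ((m : ℤ) + 1) * m := by
      have := congrArg (Nat.cast : ℕ → ℤ) (sum_range_id_mul_two (m + 1))
      push_cast [Nat.add_sub_cancel] at this
      exact this
    have hlast : ∑ i ∈ range m, |(i : ℤ) - m| = ∑ i ∈ range m, ((m : ℤ) - i) :=
      sum_congr rfl fun i hi => by
        rw [abs_sub_comm, abs_of_nonneg (by have := mem_range.mp hi; omega)]
    simp only [sum_range_succ, sum_add_distrib, sub_self, abs_zero, add_zero] at ih hgauss ⊢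
    simp only [abs_sub_comm (m : ℤ), hlast, sum_sub_distrib, sum_const, card_range] at ih ⊢
    push_cast at ih ⊢
    linear_combination ih - 3 * hgauss

section ZModVal

variable [NeZero n]

theorem sum_zmod_val_eq_sum_range {M : Type*} [AddCommMonoid M] (f : ℕ → M) :
    ∑ a : ZMod n, f a.val = ∑ i ∈ range n, f i :=
  sum_nbij' ZMod.val (fun i => (i : ZMod n)) (fun a _ => mem_range.mpr a.val_lt)
    (fun _ _ => mem_univ _) (fun a _ => ZMod.natCast_zmod_val a)
    (fun _ hi => ZMod.val_cast_of_lt (mem_range.mp hi)) fun _ _ => rfl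

theorem sum_sum_abs_sub_val_perm (e : Equiv.Perm (ZMod n)) :
    3 * ∑ a : ZMod n, ∑ b : ZMod n, |((e a).val : ℤ) - (e b).val| = (n : ℤ) ^ 3 - n := by
  have hreindex : ∑ a : ZMod n, ∑ b : ZMod n, |((e a).val : ℤ) - (e b).val| =
      ∑ a : ZMod n, ∑ b : ZMod n, |(a.val : ℤ) - b.val| :=
    Fintype.sum_equiv e _ _ fun a => Fintype.sum_equiv e _ _ fun b => rfl
  rw [hreindex, ← sum_range_sum_range_abs_sub, ← sum_zmod_val_eq_sum_range]
  congr 1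
  exact sum_congr rfl fun a _ => sum_zmod_val_eq_sum_range fun j => |(a.val : ℤ) - j|

end ZModVal

theorem sum_sum_eq_two_nsmul_sum_filter_lt_add_sum_diag {α β M : Type*} [Fintype α]
    [LinearOrder β] [AddCommMonoid M] {g : α → β} (hg : Function.Injective g)
    {f : α → α → M} (hf : ∀ a b, f a b = f b a) :
    ∑ a, ∑ b, f a b =
      2 • ∑ p ∈ univ.filter (fun p : α × α => g p.1 < g p.2), f p.1 p.2 + ∑ a, f a a := by
  classical
  have hgt : ∑ p ∈ univ.filter (fun p : α × α => ¬g p.1 < g p.2 ∧ g p.2 < g p.1), f p.1 p.2 =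
      ∑ p ∈ univ.filter (fun p : α × α => g p.1 < g p.2), f p.1 p.2 :=
    sum_nbij' Prod.swap Prod.swap (by simp +contextual) (by simp +contextual [le_of_lt])
      (fun _ _ => rfl) (fun _ _ => rfl) fun p _ => hf p.1 p.2
  have hdiag : univ.filter (fun p : α × α => ¬g p.1 < g p.2 ∧ ¬g p.2 < g p.1) = univ.diag := by
    ext p
    simp only [mem_filter, mem_univ, true_and, mem_diag, not_lt]
    exact ⟨fun h => hg (le_antisymm h.2 h.1), fun h => by rw [h]; simp⟩
  rw [← Fintype.sum_prod_type', ← sum_filter_add_sum_filter_not univ fun p => g p.1 < g p.2,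
    ← sum_filter_add_sum_filter_not (univ.filter fun p : α × α => ¬g p.1 < g p.2)
      fun p => g p.2 < g p.1]
  simp only [filter_filter, hgt, hdiag, sum_diag, two_nsmul, add_assoc]

theorem circPos_apply (σ : Equiv.Perm (ZMod n)) (r s : ZMod n) : circPos σ r s = σ (s - r) := by
  simp [circPos, sub_eq_neg_add]

section Circulant

variable [NeZero n] (σ : Equiv.Perm (ZMod n))

theorem circDist_eq_shiftCorr (r₁ r₂ : ZMod n) :
    circDist σ r₁ r₂ = shiftCorr σ (r₁ - r₂) :=
  Fintype.sum_equiv (Equiv.subRight r₁) _ _ fun s => by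
    rw [circPos_apply, circPos_apply, abs_sub_comm, Equiv.subRight_apply, sub_add_sub_cancel]

theorem circDist_comm (r₁ r₂ : ZMod n) : circDist σ r₁ r₂ = circDist σ r₂ r₁ :=
  sum_congr rfl fun _ _ => abs_sub_comm _ _

theorem circDist_self (r : ZMod n) : circDist σ r r = 0 := by
  simp [circDist]

/-- `circColumn σ s r = circPos σ r s`: the column of symbol `s` in row `r` is a bijection in `r`. -/
def circColumn (s : ZMod n) : Equiv.Perm (ZMod n) := (Equiv.subLeft s).trans σ

theorem sum_sum_circDist :
    3 * ∑ r₁ : ZMod n, ∑ r₂ : ZMod n, circDist σ r₁ r₂ = n * ((n : ℤ) ^ 3 - n) := by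
  have hcol (s r : ZMod n) : circPos σ r s = circColumn σ s r := circPos_apply σ r s
  simp only [circDist, hcol]
  rw [(sum_congr rfl fun _ _ => sum_comm).trans sum_comm, mul_sum]
  simp only [sum_sum_abs_sub_val_perm, sum_const, card_univ, ZMod.card, nsmul_eq_mul]

end Circulant

def rowPairs (n : ℕ) [NeZero n] : Finset (ZMod n × ZMod n) :=
  univ.filter fun p => p.1.val < p.2.val

section RowPairs

variable [NeZero n]

theorem two_mul_card_rowPairs : 2 * (#(rowPairs n) : ℤ) = (n : ℤ) ^ 2 - n := by
  have h := sum_sum_eq_two_nsmul_sum_filter_lt_add_sum_diag (ZMod.val_injective n)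
    (f := fun (_ _ : ZMod n) => (1 : ℤ)) fun _ _ => rfl
  simp only [sum_const, card_univ, ZMod.card, nsmul_eq_mul, mul_one] at h
  rw [rowPairs]
  push_cast at h ⊢
  linear_combination -h

theorem six_mul_sum_rowPairs_circDist (σ : Equiv.Perm (ZMod n)) :
    6 * ∑ p ∈ rowPairs n, circDist σ p.1 p.2 = (n : ℤ) ^ 2 * ((n : ℤ) ^ 2 - 1) := by
  have h := sum_sum_eq_two_nsmul_sum_filter_lt_add_sum_diag (ZMod.val_injective n)
    (circDist_comm σ)
  simp only [circDist_self, sum_const_zero, add_zero, nsmul_eq_mul] at h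
  rw [rowPairs]
  linear_combination 3 * h.symm + sum_sum_circDist σ

end RowPairs

theorem three_mul_abs_sub_of_nearPerfect (hn : n % 3 = 1) {f : ℤ}
    (hf : f = ((n : ℤ) * ((n : ℤ) + 1) - 2) / 3 ∨ f = ((n : ℤ) * ((n : ℤ) + 1) - 2) / 3 + 2) :
    3 * |3 * f - n * (n + 1)| = 3 * f - n * (n + 1) + 8 := by
  obtain ⟨k, rfl⟩ : ∃ k, n = 3 * k + 1 := ⟨n / 3, by omega⟩
  have ha : 3 * ((((3 * k + 1 : ℕ) : ℤ) * ((3 * k + 1 : ℕ) + 1) - 2) / 3) =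
      ((3 * k + 1 : ℕ) : ℤ) * ((3 * k + 1 : ℕ) + 1) - 2 :=
    Int.mul_ediv_cancel' ⟨3 * k ^ 2 + 3 * k, by push_cast; ring⟩
  set x := 3 * f - ((3 * k + 1 : ℕ) : ℤ) * ((3 * k + 1 : ℕ) + 1)
  have hx : x = -2 ∨ x = 4 := by
    rcases hf with rfl | rfl
    exacts [.inl (by linarith), .inr (by linarith)]
  rcases hx with hx | hx <;> rw [hx] <;> norm_num

theorem nearPP_attains_bound [NeZero n] (hn : n % 3 = 1) (σ : Equiv.Perm (ZMod n))
    (hf : ∀ δ : ZMod n, δ ≠ 0 →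
      shiftCorr σ δ = ((n : ℤ) * ((n : ℤ) + 1) - 2) / 3 ∨
      shiftCorr σ δ = ((n : ℤ) * ((n : ℤ) + 1) - 2) / 3 + 2) :
    3 * circImbalance3 σ = 4 * (n : ℤ) * ((n : ℤ) - 1) := by
  have hpair : ∀ p ∈ rowPairs n, 3 * |3 * circDist σ p.1 p.2 - n * (n + 1)| =
      3 * circDist σ p.1 p.2 - n * (n + 1) + 8 := fun p hp => by
    rw [rowPairs, mem_filter] at hp
    have hne : p.1 - p.2 ≠ 0 := sub_ne_zero.mpr (ne_of_apply_ne ZMod.val hp.2.ne)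
    rw [circDist_eq_shiftCorr]
    exact three_mul_abs_sub_of_nearPerfect hn (hf _ hne)
  have hsum : 3 * circImbalance3 σ =
      3 * ∑ p ∈ rowPairs n, circDist σ p.1 p.2 - (n * (n + 1) - 8) * #(rowPairs n) := by
    change 3 * ∑ p ∈ rowPairs n, _ = _
    rw [mul_sum, sum_congr rfl hpair, sum_add_distrib, sum_sub_distrib, mul_sum]
    simp only [sum_const, nsmul_eq_mul]
    ring
  refine mul_left_cancel₀ (two_ne_zero (α := ℤ)) ?_
  linear_combination 2 * hsum + six_mul_sum_rowPairs_circDist σ -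
    (n * (n + 1) - 8) * two_mul_card_rowPairs (n := n)
end
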